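/- arXiv:math/0112014 — 7 statements merged into one kernel-verified Lean document; each statement's English description precedes it below -/
import Mathlib

section
/- Let $k > 0$, $\rho_0 > 0$, $d_0 \in \mathbb{R}$ with $d_0 > -\sqrt{2k\rho_0}$, and set $\Gamma(t) = 1 + d_0 t + \tfrac{k}{2}\rho_0 t^2$. Then the functions $\rho(t) = \rho_0/\Gamma(t)$ and $d(t) = (d_0 + k\rho_0 t)/\Gamma(t)$ are defined for all $t \geq 0$ and satisfy the coupled system $d'(t) + d(t)^2 = k\rho(t)$ and $\rho'(t) + \rho(t) d(t) = 0$ with initial values $d(0) = d_0$, $\rho(0) = \rho_0$. -/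
/-!
The solution is a logarithmic derivative: with `Γ` the quadratic of the statement, `Γ' = d0 + kρ0 t`
and `Γ'' = kρ0`, so `d = Γ'/Γ` gives `d' = Γ''/Γ - d² = kρ - d²` and `ρ = ρ0/Γ` gives
`ρ' = -ρ0 Γ'/Γ² = -ρd`. For `t ≥ 0`, `Γ` stays positive: either `d0 ≥ 0`, or `d0² < 2kρ0`
and `Γ` has negative discriminant.
-/

open Real

lemma quadratic_pos_of_lt_sqrt {c b t : ℝ} (hc : 0 < c) (hb : b > -√(2 * c)) (ht : 0 ≤ t) :
    0 < 1 + b * t + c / 2 * t ^ 2 := by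
  rcases le_or_gt 0 b with hb0 | hb0
  · nlinarith [sq_nonneg t, mul_nonneg hb0 ht]
  · have hsq : b ^ 2 < 2 * c := by
      nlinarith [sq_sqrt (by positivity : (0:ℝ) ≤ 2 * c), sqrt_nonneg (2 * c)]
    nlinarith [sq_nonneg (c * t + b)]

lemma hasDerivAt_quadratic (b c t : ℝ) :
    HasDerivAt (fun s => 1 + b * s + c / 2 * s ^ 2) (b + c * t) t := by
  refine (((hasDerivAt_id' t).const_mul b).const_add 1 |>.add
    ((hasDerivAt_pow 2 t).const_mul (c / 2))).congr_deriv ?_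
  push_cast
  ring

section LogDeriv

variable {f f' : ℝ → ℝ} {t : ℝ}

lemma HasDerivAt.hasDerivAt_div_self {c : ℝ} (hf : HasDerivAt f (f' t) t) (hf' : HasDerivAt f' c t)
    (hft : f t ≠ 0) :
    HasDerivAt (fun s => f' s / f s) (c / f t - (f' t / f t) ^ 2) t := by
  refine (hf'.div hf hft).congr_deriv ?_
  field_simp

lemma HasDerivAt.hasDerivAt_const_div (a : ℝ) (hf : HasDerivAt f (f' t) t)
    (hft : f t ≠ 0) :
    HasDerivAt (fun s => a / f s) (-(a / f t * (f' t / f t))) t := by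
  refine ((hasDerivAt_const t a).div hf hft).congr_deriv ?_
  field_simp
  ring

end LogDeriv

theorem explicit_solution_zero_background
    (k ρ0 d0 : ℝ) (hk : 0 < k) (hρ0 : 0 < ρ0)
    (hd0 : d0 > -Real.sqrt (2 * k * ρ0))
    (Γ ρ d : ℝ → ℝ)
    (hΓ : ∀ t, Γ t = 1 + d0 * t + k / 2 * ρ0 * t ^ 2)
    (hρ : ∀ t, ρ t = ρ0 / Γ t)
    (hd : ∀ t, d t = (d0 + k * ρ0 * t) / Γ t) :
    (∀ t ≥ (0:ℝ), Γ t ≠ 0) ∧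
    d 0 = d0 ∧ ρ 0 = ρ0 ∧
    (∀ t ≥ (0:ℝ), HasDerivAt d (k * ρ t - (d t) ^ 2) t) ∧
    (∀ t ≥ (0:ℝ), HasDerivAt ρ (-(ρ t * d t)) t) := by
  obtain rfl : ρ = fun s => ρ0 / Γ s := funext hρ
  obtain rfl : d = fun s => (d0 + k * ρ0 * s) / Γ s := funext hd
  have hΓf : Γ = fun s => 1 + d0 * s + k * ρ0 / 2 * s ^ 2 := by
    funext s; rw [hΓ]; ring
  have hΓne : ∀ t ≥ (0:ℝ), Γ t ≠ 0 := fun t ht => by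
    rw [hΓf]
    exact (quadratic_pos_of_lt_sqrt (mul_pos hk hρ0) (by rwa [← mul_assoc]) ht).ne'
  have hΓ' (t : ℝ) : HasDerivAt Γ (d0 + k * ρ0 * t) t := hΓf ▸ hasDerivAt_quadratic d0 (k * ρ0) t
  have hΓ'' (t : ℝ) : HasDerivAt (fun s => d0 + k * ρ0 * s) (k * ρ0) t := by
    simpa using ((hasDerivAt_id t).const_mul (k * ρ0)).const_add d0
  refine ⟨hΓne, by simp [hΓ], by simp [hΓ], fun t ht => ?_, fun t ht =>
    (hΓ' t).hasDerivAt_const_div (f' := fun s => d0 + k * ρ0 * s) ρ0 (hΓne t ht)⟩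
  refine ((hΓ' t).hasDerivAt_div_self (hΓ'' t) (hΓne t ht)).congr_deriv ?_
  ring
end

section
/- Let $k > 0$, $\rho_0 > 0$, and suppose $0 < d_0 < \sqrt{k\rho_0}$. Then the function $d(t) = (d_0 + k\rho_0 t)/(1 + d_0 t + \tfrac{k}{2}\rho_0 t^2)$ satisfies $0 < d(t) \leq d_{\max}$ for all $t \geq 0$, where $d_{\max} = \dfrac{k\rho_0}{\sqrt{2k\rho_0 - d_0^2}}$, and the maximum is attained at the time $t_e = \dfrac{\sqrt{2k\rho_0 - d_0^2} - d_0}{k\rho_0}$. -/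
/-!
Write `a = kρ₀` and `s = √(2a - d₀²)`. Completing the square gives the identity
`a (1 + d₀ t + a t²/2) - s (d₀ + a t) = (a t + d₀ - s)² / 2`,
so `d(t) ≤ a / s` for every `t`, with equality exactly when `a t = s - d₀`.
-/

namespace VelocityGradient

noncomputable def profile (a d₀ t : ℝ) : ℝ :=
  (d₀ + a * t) / (1 + d₀ * t + a / 2 * t ^ 2)

variable {a d₀ : ℝ}

theorem denom_pos (h : d₀ ^ 2 < 2 * a) (t : ℝ) : 0 < 1 + d₀ * t + a / 2 * t ^ 2 := by
  have ha : 0 < a := by nlinarith [sq_nonneg d₀]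
  have hsquare : 2 * a * (1 + d₀ * t + a / 2 * t ^ 2) = (a * t + d₀) ^ 2 + (2 * a - d₀ ^ 2) := by
    ring
  nlinarith [sq_nonneg (a * t + d₀)]

theorem profile_pos (ha : 0 < a) (hd₀ : 0 < d₀) {t : ℝ} (ht : 0 ≤ t) : 0 < profile a d₀ t := by
  unfold profile
  positivity

theorem mul_denom_sub_mul_numer {s : ℝ} (hs : s ^ 2 = 2 * a - d₀ ^ 2) (t : ℝ) :
    a * (1 + d₀ * t + a / 2 * t ^ 2) - s * (d₀ + a * t) = (a * t + d₀ - s) ^ 2 / 2 := by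
  linear_combination (-1 / 2 : ℝ) * hs

theorem profile_le (h : d₀ ^ 2 < 2 * a) (t : ℝ) :
    profile a d₀ t ≤ a / √(2 * a - d₀ ^ 2) := by
  have hs := Real.sq_sqrt (sub_nonneg.mpr h.le)
  rw [profile, div_le_div_iff₀ (denom_pos h t) (Real.sqrt_pos.mpr (sub_pos.mpr h))]
  nlinarith [mul_denom_sub_mul_numer hs t, sq_nonneg (a * t + d₀ - √(2 * a - d₀ ^ 2))]

theorem profile_eq_max (h : d₀ ^ 2 < 2 * a) :
    profile a d₀ ((√(2 * a - d₀ ^ 2) - d₀) / a) = a / √(2 * a - d₀ ^ 2) := by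
  set s := √(2 * a - d₀ ^ 2)
  set t := (s - d₀) / a
  have ha : 0 < a := by nlinarith [sq_nonneg d₀]
  have hnumer : d₀ + a * t = s := by
    simp only [t]
    field_simp
    ring
  have hkey := mul_denom_sub_mul_numer (Real.sq_sqrt (sub_nonneg.mpr h.le)) t
  rw [hnumer, show a * t + d₀ - s = 0 by linarith, sub_eq_iff_eq_add] at hkey
  rw [profile, hnumer, div_eq_div_iff (denom_pos h t).ne' (Real.sqrt_pos.mpr (sub_pos.mpr h)).ne']
  linarith

end VelocityGradient

open VelocityGradient in
theorem velocity_gradient_bounds_general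
    (k ρ0 d0 : ℝ)
    (hd0pos : 0 < d0) (hd0 : d0 < Real.sqrt (k * ρ0))
    (d : ℝ → ℝ)
    (hd : ∀ t, d t = (d0 + k * ρ0 * t) / (1 + d0 * t + k / 2 * ρ0 * t ^ 2)) :
    (∀ t ≥ (0:ℝ), 0 < d t ∧ d t ≤ k * ρ0 / Real.sqrt (2 * k * ρ0 - d0 ^ 2)) ∧
    d ((Real.sqrt (2 * k * ρ0 - d0 ^ 2) - d0) / (k * ρ0)) =
      k * ρ0 / Real.sqrt (2 * k * ρ0 - d0 ^ 2) := by
  have hprofile : ∀ t, d t = profile (k * ρ0) d0 t := fun t => by rw [hd, profile]; ring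
  have ha : 0 < k * ρ0 := Real.sqrt_pos.mp (hd0pos.trans hd0)
  have hsq : d0 ^ 2 < 2 * (k * ρ0) := by
    linarith [(Real.lt_sqrt hd0pos.le).mp hd0]
  rw [show 2 * k * ρ0 = 2 * (k * ρ0) by ring]
  refine ⟨fun t ht => ?_, ?_⟩
  · rw [hprofile]
    exact ⟨profile_pos ha hd0pos ht, profile_le hsq t⟩
  · rw [hprofile, profile_eq_max hsq]

theorem velocity_gradient_bounds
    (k ρ0 d0 : ℝ) (hk : 0 < k) (hρ0 : 0 < ρ0)
    (hd0pos : 0 < d0) (hd0 : d0 < Real.sqrt (k * ρ0))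
    (d : ℝ → ℝ)
    (hd : ∀ t, d t = (d0 + k * ρ0 * t) / (1 + d0 * t + k / 2 * ρ0 * t ^ 2)) :
    (∀ t ≥ (0:ℝ), 0 < d t ∧ d t ≤ k * ρ0 / Real.sqrt (2 * k * ρ0 - d0 ^ 2)) ∧
    d ((Real.sqrt (2 * k * ρ0 - d0 ^ 2) - d0) / (k * ρ0)) =
      k * ρ0 / Real.sqrt (2 * k * ρ0 - d0 ^ 2) :=
  velocity_gradient_bounds_general k ρ0 d0 hd0pos hd0 d hd
end

section
/- Let $c > 0$, $k > 0$, $\rho_0 > 0$, $u_0' \in \mathbb{R}$, and define $\Gamma(t) = 1 + \dfrac{u_0'}{\sqrt{ck}} \sin(\sqrt{ck}\,t) - \dfrac{\rho_0 - c}{c}\big(\cos(\sqrt{ck}\,t) - 1\big)$. Then $\Gamma(t) > 0$ for all $t \geq 0$ if and only if $|u_0'| < \sqrt{k(2\rho_0 - c)}$. -/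
/-!
Writing `θ = √(ck) t`, `a = u₀'/√(ck)` and `b = (ρ₀ - c)/c`, one has
`Γ = (1 + b) + a sin θ - b cos θ`. The trigonometric part ranges over `[-R, R]` with
`R = √(a² + b²)`, and the value `-R` is attained at some `θ ≥ 0`, so `Γ` stays positive on
`t ≥ 0` iff `R < 1 + b`, i.e. iff `a² < 1 + 2b`. Multiplying by `ck` turns this into
`u₀'² < k (2ρ₀ - c)`.
-/

open Real

theorem abs_mul_sin_add_mul_cos_le (a b θ : ℝ) :
    |a * sin θ + b * cos θ| ≤ √(a ^ 2 + b ^ 2) :=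
  abs_le_sqrt <| by
    nlinarith [sin_sq_add_cos_sq θ, sq_nonneg (a * cos θ - b * sin θ)]

theorem exists_nonneg_mul_sin_add_mul_cos_eq_neg_sqrt (a b : ℝ) :
    ∃ θ ≥ 0, a * sin θ + b * cos θ = -√(a ^ 2 + b ^ 2) := by
  by_cases hab : a = 0 ∧ b = 0
  · exact ⟨0, le_rfl, by simp [hab.1, hab.2]⟩
  -- `θ` is an argument of `-(b + a i)`, shifted by `2π` to make it nonnegative.
  set z : ℂ := ⟨-b, -a⟩
  have hre : z.re = -b := rfl
  have him : z.im = -a := rfl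
  have hz : z ≠ 0 := fun h => hab ⟨by simpa [h] using him, by simpa [h] using hre⟩
  have hnorm : ‖z‖ = √(a ^ 2 + b ^ 2) := by
    rw [Complex.norm_def, Complex.normSq_apply, hre, him]
    ring_nf
  refine ⟨Complex.arg z + 2 * π, by linarith [Complex.neg_pi_lt_arg z, pi_pos], ?_⟩
  rw [sin_add_two_pi, cos_add_two_pi, Complex.sin_arg, Complex.cos_arg hz, hnorm, hre, him]
  calc a * (-a / √(a ^ 2 + b ^ 2)) + b * (-b / √(a ^ 2 + b ^ 2))
      = -((a ^ 2 + b ^ 2) / √(a ^ 2 + b ^ 2)) := by ring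
    _ = -√(a ^ 2 + b ^ 2) := by rw [div_sqrt]

theorem forall_nonneg_pos_add_mul_sin_add_mul_cos_iff (C a b : ℝ) :
    (∀ θ ≥ (0 : ℝ), 0 < C + a * sin θ + b * cos θ) ↔ √(a ^ 2 + b ^ 2) < C := by
  constructor
  · intro h
    obtain ⟨θ, hθ, hmin⟩ := exists_nonneg_mul_sin_add_mul_cos_eq_neg_sqrt a b
    have := h θ hθ
    linarith
  · intro h θ _
    have := (abs_le.mp (abs_mul_sin_add_mul_cos_le a b θ)).1
    linarith

theorem sqrt_sq_add_sq_lt_one_add_iff (a b : ℝ) :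
    √(a ^ 2 + b ^ 2) < 1 + b ↔ a ^ 2 < 1 + 2 * b := by
  constructor
  · intro h
    have hpos : 0 < 1 + b := (sqrt_nonneg _).trans_lt h
    nlinarith [(sqrt_lt' hpos).mp h]
  · intro h
    have hpos : 0 < 1 + b := by nlinarith [sq_nonneg a]
    rw [sqrt_lt' hpos]
    nlinarith

theorem forall_nonneg_comp_mul_iff {ω : ℝ} (hω : 0 < ω) (P : ℝ → Prop) :
    (∀ t ≥ (0 : ℝ), P (ω * t)) ↔ ∀ θ ≥ (0 : ℝ), P θ := by
  refine ⟨fun h θ hθ => ?_, fun h t ht => h _ (mul_nonneg hω.le ht)⟩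
  simpa [mul_div_cancel₀ θ hω.ne'] using h (θ / ω) (div_nonneg hθ hω.le)

theorem critical_threshold_constant_background_general
    (c k ρ0 u0' : ℝ) (hc : 0 < c) (hk : 0 < k)
    (Γ : ℝ → ℝ)
    (hΓ : ∀ t, Γ t = 1 + u0' / Real.sqrt (c * k) * Real.sin (Real.sqrt (c * k) * t)
        - (ρ0 - c) / c * (Real.cos (Real.sqrt (c * k) * t) - 1)) :
    (∀ t ≥ (0:ℝ), 0 < Γ t) ↔ |u0'| < Real.sqrt (k * (2 * ρ0 - c)) := by
  have hck : 0 < c * k := mul_pos hc hk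
  set ω := √(c * k)
  set a := u0' / ω
  set b := (ρ0 - c) / c
  have hΓ' : ∀ t, Γ t = (1 + b) + a * sin (ω * t) + -b * cos (ω * t) := fun t => by
    rw [hΓ t]; ring
  have hscaled : a ^ 2 < 1 + 2 * b ↔ u0' ^ 2 < k * (2 * ρ0 - c) := by
    have ha : a ^ 2 = u0' ^ 2 / (c * k) := by rw [div_pow, sq_sqrt hck.le]
    have hb : 1 + 2 * b = k * (2 * ρ0 - c) / (c * k) := by
      simp only [b]; field_simp; ring
    rw [ha, hb, div_lt_div_iff_of_pos_right hck]
  simp only [hΓ']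
  rw [forall_nonneg_comp_mul_iff (sqrt_pos.mpr hck)
      (fun θ => 0 < 1 + b + a * sin θ + -b * cos θ),
    forall_nonneg_pos_add_mul_sin_add_mul_cos_iff, neg_sq, sqrt_sq_add_sq_lt_one_add_iff,
    hscaled, lt_sqrt (abs_nonneg _), sq_abs]

theorem critical_threshold_constant_background
    (c k ρ0 u0' : ℝ) (hc : 0 < c) (hk : 0 < k) (hρ0 : 0 < ρ0)
    (Γ : ℝ → ℝ)
    (hΓ : ∀ t, Γ t = 1 + u0' / Real.sqrt (c * k) * Real.sin (Real.sqrt (c * k) * t)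
        - (ρ0 - c) / c * (Real.cos (Real.sqrt (c * k) * t) - 1)) :
    (∀ t ≥ (0:ℝ), 0 < Γ t) ↔ |u0'| < Real.sqrt (k * (2 * ρ0 - c)) :=
  critical_threshold_constant_background_general c k ρ0 u0' hc hk Γ hΓ
end

section
/- Let $c > 0$, $k < 0$, $\rho_0 > 0$, $u_0' \in \mathbb{R}$, and set $\omega = \sqrt{-ck}$. Define $\Gamma(t) = \dfrac{\rho_0}{c} + \dfrac{1}{2}\Big(1 - \dfrac{\rho_0}{c} - \dfrac{u_0'}{\omega}\Big) e^{-\omega t} + \dfrac{1}{2}\Big(1 - \dfrac{\rho_0}{c} + \dfrac{u_0'}{\omega}\Big) e^{\omega t}$. Then $\Gamma(t) > 0$ for all $t \geq 0$ if and only if $u_0' \geq -\Big(1 - \dfrac{\rho_0}{c}\Big)\omega$. -/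
theorem critical_threshold_attractive
    (c k ρ0 u0' : ℝ) (hc : 0 < c) (hk : k < 0) (hρ0 : 0 < ρ0)
    (ω : ℝ) (hω : ω = Real.sqrt (-(c * k)))
    (Γ : ℝ → ℝ)
    (hΓ : ∀ t, Γ t = ρ0 / c
        + 1 / 2 * (1 - ρ0 / c - u0' / ω) * Real.exp (-(ω * t))
        + 1 / 2 * (1 - ρ0 / c + u0' / ω) * Real.exp (ω * t)) :
    (∀ t ≥ (0:ℝ), 0 < Γ t) ↔ u0' ≥ -(1 - ρ0 / c) * ω := by
  have hck : 0 < -(c * k) := by nlinarith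
  have hω0 : 0 < ω := by rw [hω]; exact Real.sqrt_pos.2 hck
  obtain ⟨a, ha⟩ : ∃ x : ℝ, 1 - ρ0 / c = x := ⟨_, rfl⟩
  obtain ⟨b, hbq⟩ : ∃ x : ℝ, u0' / ω = x := ⟨_, rfl⟩
  rw [ha, hbq] at hΓ
  rw [ha]
  have hbw : b * ω = u0' := by rw [← hbq]; exact div_mul_cancel₀ u0' (ne_of_gt hω0)
  have hρc : 0 < ρ0 / c := div_pos hρ0 hc
  have haρ : a + ρ0 / c = 1 := by rw [← ha]; ring
  constructor
  · intro h
    by_contra hcon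
    push_neg at hcon
    have hab : a + b < 0 := by
      have hmul : b * ω < -a * ω := by rw [hbw]; exact hcon
      have : b < -a := lt_of_mul_lt_mul_right hmul (le_of_lt hω0)
      linarith
    obtain ⟨Y, hY⟩ : ∃ x : ℝ, (ρ0 / c + |a - b| / 2 + 1) / (-(a + b) / 2) = x := ⟨_, rfl⟩
    obtain ⟨X, hXdef⟩ : ∃ x : ℝ, max 1 Y = x := ⟨_, rfl⟩
    have hX1 : (1:ℝ) ≤ X := hXdef ▸ le_max_left _ _
    have hXY : Y ≤ X := hXdef ▸ le_max_right _ _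
    have hX0 : 0 < X := lt_of_lt_of_le one_pos hX1
    have ht0 : 0 ≤ Real.log X / ω := div_nonneg (Real.log_nonneg hX1) (le_of_lt hω0)
    set t : ℝ := Real.log X / ω with ht
    have hexp : Real.exp (ω * t) = X := by
      rw [ht, mul_div_cancel₀ _ (ne_of_gt hω0), Real.exp_log hX0]
    have hem : Real.exp (-(ω * t)) ≤ 1 :=
      Real.exp_le_one_iff.2 (by rw [ht]; nlinarith)
    have hep : 0 < Real.exp (-(ω * t)) := Real.exp_pos _
    have hG := h t ht0
    rw [hΓ t, hexp] at hG
    have hden : -(a + b) / 2 ≠ 0 := ne_of_gt (by linarith)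
    have h0 : Y * (-(a + b) / 2) = ρ0 / c + |a - b| / 2 + 1 := by
      rw [← hY]; exact div_mul_cancel₀ _ hden
    have hYval : (a + b) / 2 * Y = -(ρ0 / c + |a - b| / 2 + 1) := by
      linear_combination -h0
    have h1 : 1 / 2 * (a + b) * X ≤ -(ρ0 / c + |a - b| / 2 + 1) := by
      have hm : (a + b) / 2 * X ≤ (a + b) / 2 * Y :=
        mul_le_mul_of_nonpos_left hXY (by linarith)
      calc 1 / 2 * (a + b) * X = (a + b) / 2 * X := by ring
        _ ≤ (a + b) / 2 * Y := hm
        _ = _ := hYval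
    have h2 : 1 / 2 * (a - b) * Real.exp (-(ω * t)) ≤ |a - b| / 2 := by
      rcases le_or_gt 0 (a - b) with hp | hp
      · rw [abs_of_nonneg hp]
        nlinarith [mul_nonneg hp (by linarith : (0:ℝ) ≤ 1 - Real.exp (-(ω * t)))]
      · rw [abs_of_neg hp]
        nlinarith [mul_nonneg (by linarith : (0:ℝ) ≤ b - a) hep.le]
    linarith [hG, h1, h2]
  · intro h t ht
    have hab : 0 ≤ a + b := by
      by_contra hcon
      push_neg at hcon
      have h1 : (a + b) * ω < 0 := mul_neg_of_neg_of_pos hcon hω0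
      have hle : -a * ω ≤ b * ω := by rw [hbw]; linarith
      nlinarith
    rw [hΓ t]
    have hep : 1 ≤ Real.exp (ω * t) := Real.one_le_exp (by positivity)
    have hem0 : 0 < Real.exp (-(ω * t)) := Real.exp_pos _
    have hem1 : Real.exp (-(ω * t)) ≤ 1 :=
      Real.exp_le_one_iff.2 (by nlinarith)
    rcases le_or_gt 0 (a - b) with hp | hp
    · have t1 : 0 ≤ 1 / 2 * (a - b) * Real.exp (-(ω * t)) :=
        mul_nonneg (mul_nonneg (by norm_num) hp) hem0.le
      have t2 : 0 ≤ 1 / 2 * (a + b) * Real.exp (ω * t) :=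
        mul_nonneg (mul_nonneg (by norm_num) hab) (Real.exp_pos _).le
      linarith
    · have t1 : 0 ≤ (b - a) * (1 - Real.exp (-(ω * t))) :=
        mul_nonneg (by linarith) (by linarith)
      have t2 : 0 ≤ (a + b) * (Real.exp (ω * t) - 1) :=
        mul_nonneg hab (by linarith)
      nlinarith [t1, t2]
end

section
/- Let $\lambda > 0$, $\nu > 0$ with $\nu < \lambda$, and let $a < 1/2$ and $b$ be real numbers. Define $\Gamma(t) = (1 - 2a) + (a - b)e^{-(\nu + \lambda)t} + (a + b)e^{(\nu - \lambda)t}$. If $a + b \geq 0$, then $\Gamma(t) \geq \min\{1, 1 - 2a\} > 0$ for all $t \geq 0$. -/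
theorem strong_relaxation_positivity_case1
    (lam ν a b : ℝ) (hlam : 0 < lam) (hν : 0 < ν) (hνlam : ν < lam)
    (ha : a < 1 / 2) (hab : a + b ≥ 0)
    (Γ : ℝ → ℝ)
    (hΓ : ∀ t, Γ t = (1 - 2 * a) + (a - b) * Real.exp (-((ν + lam) * t))
        + (a + b) * Real.exp ((ν - lam) * t)) :
    ∀ t ≥ (0:ℝ), Γ t ≥ min 1 (1 - 2 * a) ∧ 0 < min 1 (1 - 2 * a) := by
  intro t ht
  have h1 : Real.exp (-((ν + lam) * t)) ≤ 1 := by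
    rw [Real.exp_le_one_iff]
    nlinarith
  have h2 : Real.exp (-((ν + lam) * t)) ≤ Real.exp ((ν - lam) * t) := by
    apply Real.exp_le_exp.mpr
    nlinarith
  have h3 : 0 < Real.exp (-((ν + lam) * t)) := Real.exp_pos _
  constructor
  · rw [hΓ]
    rcases le_total (1:ℝ) (1 - 2 * a) with h | h
    · rw [min_eq_left h]
      nlinarith
    · rw [min_eq_right h]
      nlinarith
  · have : 0 < 1 - 2 * a := by linarith
    positivity
end

section
/- Let $\lambda > \nu > 0$, $a < 1/2$, $b \in \mathbb{R}$ with $a + b < 0$ and $b > \tfrac{\lambda}{\nu} a$. Then $\Gamma(t) = (1 - 2a) + (a - b)e^{-(\nu + \lambda)t} + (a + b)e^{(\nu - \lambda)t} > 0$ for all $t \geq 0$. -/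
theorem strong_relaxation_positivity_case2
    (lam ν a b : ℝ) (hν : 0 < ν) (hνlam : ν < lam)
    (ha : a < 1 / 2) (hab : a + b < 0) (hb : b > lam / ν * a)
    (Γ : ℝ → ℝ)
    (hΓ : ∀ t, Γ t = (1 - 2 * a) + (a - b) * Real.exp (-((ν + lam) * t))
        + (a + b) * Real.exp ((ν - lam) * t)) :
    ∀ t ≥ (0:ℝ), 0 < Γ t := by
  intro t ht
  have hbν : b * ν > lam * a := by
    have := (div_mul_eq_mul_div lam ν a) ▸ hb
    have h' : lam / ν * a * ν = lam * a := by field_simp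
    nlinarith [hb, hν]
  set u := Real.exp (-((ν + lam) * t)) with hu
  set v := Real.exp ((ν - lam) * t) with hv
  have hupos : 0 < u := Real.exp_pos _
  have hvpos : 0 < v := Real.exp_pos _
  have hule : u ≤ 1 := by
    rw [hu]
    apply Real.exp_le_one_iff.mpr
    nlinarith
  have hvle : v ≤ 1 := by
    rw [hv]
    apply Real.exp_le_one_iff.mpr
    nlinarith
  -- key inequality
  have key : (a - b) * (1 - u) + (a + b) * (1 - v) ≤ 0 := by
    rcases le_or_gt a b with hcase | hcase
    · nlinarith
    · -- Bernoulli: u = v ^ r with r = (lam+ν)/(lam-ν) ≥ 1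
      set r := (lam + ν) / (lam - ν) with hr
      have hlν : 0 < lam - ν := by linarith
      have hr1 : 1 ≤ r := by
        rw [hr, le_div_iff₀ hlν]; linarith
      have huv : u = v ^ r := by
        rw [hu, hv, ← Real.exp_mul]
        congr 1
        rw [hr]
        field_simp
        ring
      have hbern : 1 + r * (v - 1) ≤ v ^ r := by
        have := one_add_mul_self_le_rpow_one_add (s := v - 1) (by linarith) hr1
        simpa using this
      have h1 : 1 - u ≤ r * (1 - v) := by rw [huv]; nlinarith
      have h2 : (a - b) * r + (a + b) ≤ 0 := by
        have heq : (a - b) * r + (a + b) = 2 * (a * lam - b * ν) / (lam - ν) := by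
          rw [hr]; field_simp; ring
        rw [heq]
        apply div_nonpos_of_nonpos_of_nonneg _ hlν.le
        nlinarith
      nlinarith [mul_le_mul_of_nonneg_left h1 (by linarith : (0:ℝ) ≤ a - b),
        mul_le_mul_of_nonneg_right h2 (by linarith : (0:ℝ) ≤ 1 - v)]
  have := hΓ t
  rw [this]
  nlinarith
end

section
/- Let $k > 0$, $e_0 > 0$, $\alpha > 0$, $u_0 > 0$, and let $r : [0,\infty) \to (0,\infty)$ solve $r''(t) = k e_0 / r(t)$ with $r(0) = \alpha$, $r'(0) = u_0$. Then for all $t \geq 0$: $r(t) \geq \sqrt{\alpha^2 + 2\alpha u_0 t + k e_0 t^2}$. -/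
/-! Along a solution of `r'' = c / r` the quantity `r r' - c t` has derivative `r'²` (the `c` cancels
against `r · r''`), so it never drops below its initial value `r₀ r₀'`. Since `(r²)' = 2 r r'`,
integrating `r r' ≥ r₀ r₀' + c t` once more gives `r² ≥ r₀² + 2 r₀ r₀' t + c t²`. -/

open Set

theorem monotoneOn_Ici_of_hasDerivAt_nonneg {f f' : ℝ → ℝ} {a : ℝ}
    (hf : ∀ t ≥ a, HasDerivAt f (f' t) t) (hf' : ∀ t ≥ a, 0 ≤ f' t) :
    MonotoneOn f (Ici a) := by
  refine monotoneOn_of_hasDerivWithinAt_nonneg (convex_Ici a)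
    (fun t ht => (hf t ht).continuousAt.continuousWithinAt)
    (fun t ht => (hf t (interior_subset ht)).hasDerivWithinAt)
    (fun t ht => hf' t (interior_subset ht))

section InverseForceLaw

variable {c : ℝ} {r r' : ℝ → ℝ}

theorem hasDerivAt_mul_deriv_sub_mul {t : ℝ} (ht : r t ≠ 0) (hr : HasDerivAt r (r' t) t)
    (hr' : HasDerivAt r' (c / r t) t) :
    HasDerivAt (fun s => r s * r' s - c * s) (r' t ^ 2) t := by
  refine ((hr.mul hr').sub ((hasDerivAt_id t).const_mul c)).congr_deriv ?_
  rw [mul_div_cancel₀ _ ht]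
  ring

theorem mul_deriv_ge_of_hasDerivAt_div (hrpos : ∀ t ≥ (0:ℝ), r t ≠ 0)
    (hr : ∀ t ≥ (0:ℝ), HasDerivAt r (r' t) t)
    (hr' : ∀ t ≥ (0:ℝ), HasDerivAt r' (c / r t) t)
    {t : ℝ} (ht : 0 ≤ t) : r 0 * r' 0 + c * t ≤ r t * r' t := by
  have hmono := monotoneOn_Ici_of_hasDerivAt_nonneg
    (fun s hs => hasDerivAt_mul_deriv_sub_mul (hrpos s hs) (hr s hs) (hr' s hs))
    (fun s _ => sq_nonneg (r' s))
  have := hmono self_mem_Ici ht ht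
  simp only [mul_zero, sub_zero] at this
  linarith

theorem sq_ge_of_hasDerivAt_div (hrpos : ∀ t ≥ (0:ℝ), r t ≠ 0)
    (hr : ∀ t ≥ (0:ℝ), HasDerivAt r (r' t) t)
    (hr' : ∀ t ≥ (0:ℝ), HasDerivAt r' (c / r t) t)
    {t : ℝ} (ht : 0 ≤ t) : r 0 ^ 2 + 2 * (r 0 * r' 0) * t + c * t ^ 2 ≤ r t ^ 2 := by
  have hderiv : ∀ s ≥ (0:ℝ),
      HasDerivAt (fun s => r s ^ 2 - (2 * (r 0 * r' 0) * s + c * s ^ 2))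
        (2 * (r s * r' s - c * s - r 0 * r' 0)) s := fun s hs => by
    refine (((hr s hs).pow 2).sub
      (((hasDerivAt_id s).const_mul (2 * (r 0 * r' 0))).add
        ((hasDerivAt_pow 2 s).const_mul c))).congr_deriv ?_
    simp only [Nat.cast_ofNat, mul_one]
    ring
  have hmono := monotoneOn_Ici_of_hasDerivAt_nonneg hderiv fun s hs => by
    linarith [mul_deriv_ge_of_hasDerivAt_div hrpos hr hr' hs]
  have := hmono self_mem_Ici ht ht
  simp only [mul_zero, zero_add, zero_pow two_ne_zero, sub_zero] at this
  linarith

end InverseForceLaw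

theorem cylindrical_flow_lower_bound_general
    (k e0 α u0 : ℝ)
    (r r' : ℝ → ℝ)
    (hrpos : ∀ t ≥ (0:ℝ), 0 < r t)
    (hr : ∀ t ≥ (0:ℝ), HasDerivAt r (r' t) t)
    (hr' : ∀ t ≥ (0:ℝ), HasDerivAt r' (k * e0 / r t) t)
    (hr0 : r 0 = α) (hr'0 : r' 0 = u0) :
    ∀ t ≥ (0:ℝ), r t ≥ Real.sqrt (α ^ 2 + 2 * α * u0 * t + k * e0 * t ^ 2) := by
  intro t ht
  have hsq := sq_ge_of_hasDerivAt_div (fun s hs => (hrpos s hs).ne') hr hr' ht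
  rw [hr0, hr'0, ← mul_assoc] at hsq
  exact (Real.sqrt_le_left (hrpos t ht).le).mpr hsq

theorem cylindrical_flow_lower_bound
    (k e0 α u0 : ℝ) (hk : 0 < k) (he0 : 0 < e0) (hα : 0 < α) (hu0 : 0 < u0)
    (r r' : ℝ → ℝ)
    (hrpos : ∀ t ≥ (0:ℝ), 0 < r t)
    (hr : ∀ t ≥ (0:ℝ), HasDerivAt r (r' t) t)
    (hr' : ∀ t ≥ (0:ℝ), HasDerivAt r' (k * e0 / r t) t)
    (hr0 : r 0 = α) (hr'0 : r' 0 = u0) :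
    ∀ t ≥ (0:ℝ), r t ≥ Real.sqrt (α ^ 2 + 2 * α * u0 * t + k * e0 * t ^ 2) :=
  cylindrical_flow_lower_bound_general k e0 α u0 r r' hrpos hr hr' hr0 hr'0
end
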